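/- In the Artin braid group B_{m+n} with n ≥ 2, for every 1 ≤ i ≤ m the loop element a_i and the first moving crossing σ_{m+1} satisfy the mixed relation a_i σ_{m+1} a_i σ_{m+1} = σ_{m+1} a_i σ_{m+1} a_i. -/

import Mathlib

/-- Defining relations of the Artin braid group on `N` strands, with generators
indexed by `Fin (N-1)` (index `s : Fin (N-1)` corresponds to the 1-based generator
`σ_{s+1}`): the far commutation relations and the braid relations. -/
def braidRels (N : ℕ) : Set (FreeGroup (Fin (N - 1))) :=
  {x | ∃ s t : Fin (N - 1), (s : ℕ) + 2 ≤ (t : ℕ) ∧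
      x = FreeGroup.of s * FreeGroup.of t * (FreeGroup.of s)⁻¹ * (FreeGroup.of t)⁻¹} ∪
  {x | ∃ s t : Fin (N - 1), (s : ℕ) + 1 = (t : ℕ) ∧
      x = FreeGroup.of s * FreeGroup.of t * FreeGroup.of s *
          (FreeGroup.of t)⁻¹ * (FreeGroup.of s)⁻¹ * (FreeGroup.of t)⁻¹}

/-- The Artin braid group on `N` strands. -/
abbrev BraidGroup (N : ℕ) := PresentedGroup (braidRels N)

/-- The generator `σ_s` (1-based, `1 ≤ s ≤ N-1`); junk value `1` out of range. -/
def sig (N s : ℕ) : BraidGroup N :=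
  if h : 1 ≤ s ∧ s ≤ N - 1 then PresentedGroup.of ⟨s - 1, by omega⟩ else 1

/-- The loop element `a_i = σ_m σ_{m-1} ⋯ σ_{i+1} · σ_i² · σ_{i+1}⁻¹ ⋯ σ_m⁻¹`
(so `a_m = σ_m²`) in the braid group on `N` strands, `m` of which are fixed. -/
def loop (N m i : ℕ) : BraidGroup N :=
  (((List.range (m - i)).map (fun l => sig N (m - l))).prod) * (sig N i) ^ 2 *
    (((List.range (m - i)).map (fun l => sig N (m - l))).prod)⁻¹

/-- `λ_l := σ_{m+l} σ_{m+l-1} ⋯ σ_{m+1}`, with `λ_0 := 1`. -/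
def lam (N m l : ℕ) : BraidGroup N :=
  ((List.range l).map (fun t => sig N (m + l - t))).prod

/-- The positive looping `∏_{l=0}^{q-1} λ_l a_j λ_l⁻¹` of a `q`-strand cable of
moving strands around the `j`-th fixed strand. -/
def cable (N m j q : ℕ) : BraidGroup N :=
  ((List.range q).map (fun l => lam N m l * loop N m j * (lam N m l)⁻¹)).prod

/-!
The mixed relation `xyxy = yxyx` is preserved by simultaneous conjugation, and for `x = u²` it
follows from the braid relation `uvu = vuv`; this settles `a_i = σ_i²`. Raising the level from
`k` to `k + 1` conjugates the loop by `w = σ_{k+1}`. If `a` satisfies the mixed relation with `w`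
and commutes with `v = σ_{k+2}`, conjugating by `v` gives it with `v w v⁻¹ = w⁻¹ v w`, and
conjugating back by `w` gives the mixed relation between `w a w⁻¹` and `v`.
-/

section MixedRelation

variable {G : Type*} [Group G]

def MixedRel (x y : G) : Prop := x * y * x * y = y * x * y * x

theorem MixedRel.conj {x y : G} (h : MixedRel x y) (g : G) :
    MixedRel (g * x * g⁻¹) (g * y * g⁻¹) := by
  simpa only [MixedRel, map_mul, MulAut.conj_apply] using congrArg (MulAut.conj g) h

theorem mixedRel_sq_of_braid {u v : G} (h : u * v * u = v * u * v) : MixedRel (u ^ 2) v := by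
  rw [MixedRel, sq]
  calc u * u * v * (u * u) * v = u * (u * v * u) * (u * v) := by group
    _ = u * (v * u * v) * (u * v) := by rw [h]
    _ = (u * v * u) * (v * u * v) := by group
    _ = (v * u * v) * (u * v * u) := by rw [h]
    _ = v * u * (v * u * v) * u := by group
    _ = v * u * (u * v * u) * u := by rw [h]
    _ = v * (u * u) * v * (u * u) := by group

theorem MixedRel.conj_of_braid {x w v : G} (h : MixedRel x w) (hxv : Commute x v)
    (hwv : w * v * w = v * w * v) : MixedRel (w * x * w⁻¹) v := by
  have hconj : v * w * v⁻¹ = w⁻¹ * v * w := by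
    calc v * w * v⁻¹ = w⁻¹ * (w * v * w) * v⁻¹ := by group
      _ = w⁻¹ * v * w := by rw [hwv]; group
  have h' : MixedRel x (w⁻¹ * v * w) := by
    simpa only [hxv.symm.mul_inv_cancel, hconj] using h.conj v
  simpa only [mul_assoc, mul_inv_cancel_left, mul_inv_cancel, mul_one] using h'.conj w

end MixedRelation

theorem commute_sig_sig {N s t : ℕ} (hst : s + 2 ≤ t) : Commute (sig N s) (sig N t) := by
  unfold sig
  split_ifs with hs ht
  · simp only [Commute, SemiconjBy, PresentedGroup.of, ← map_mul]
    apply PresentedGroup.mk_eq_mk_of_mul_inv_mem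
    simp only [mul_inv_rev, ← mul_assoc]
    exact Or.inl ⟨_, _, by simp only; omega, rfl⟩
  all_goals simp

theorem sig_braid {N s : ℕ} (hs : 1 ≤ s) (hN : s + 1 ≤ N - 1) :
    sig N s * sig N (s + 1) * sig N s = sig N (s + 1) * sig N s * sig N (s + 1) := by
  rw [sig, sig, dif_pos (by omega), dif_pos (by omega)]
  simp only [PresentedGroup.of, ← map_mul]
  apply PresentedGroup.mk_eq_mk_of_mul_inv_mem
  simp only [mul_inv_rev, ← mul_assoc]
  exact Or.inr ⟨_, _, by simp only; omega, rfl⟩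

theorem loop_self (N i : ℕ) : loop N i i = sig N i ^ 2 := by
  simp [loop]

theorem loop_succ {N i k : ℕ} (hik : i ≤ k) :
    loop N (k + 1) i = sig N (k + 1) * loop N k i * (sig N (k + 1))⁻¹ := by
  have hprod : ((List.range (k + 1 - i)).map (fun l => sig N (k + 1 - l))).prod =
      sig N (k + 1) * ((List.range (k - i)).map (fun l => sig N (k - l))).prod := by
    rw [show k + 1 - i = k - i + 1 by omega, List.range_succ_eq_map, List.map_cons,
      List.prod_cons, List.map_map]
    simp [Function.comp_def]
  rw [loop, loop, hprod]
  group

theorem commute_loop_sig {N i k t : ℕ} (hik : i ≤ k) (hkt : k + 2 ≤ t) :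
    Commute (loop N k i) (sig N t) := by
  induction k, hik using Nat.le_induction with
  | base => rw [loop_self]; exact (commute_sig_sig hkt).pow_left 2
  | succ k hik ih =>
    have hw : Commute (sig N (k + 1)) (sig N t) := commute_sig_sig hkt
    rw [loop_succ hik]
    exact (hw.mul_left (ih (by omega))).mul_left hw.inv_left

theorem mixedRel_loop_sig {N i k : ℕ} (hi : 1 ≤ i) (hik : i ≤ k) (hkN : k + 2 ≤ N) :
    MixedRel (loop N k i) (sig N (k + 1)) := by
  induction k, hik using Nat.le_induction with
  | base => rw [loop_self]; exact mixedRel_sq_of_braid (sig_braid hi (by omega))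
  | succ k hik ih =>
    rw [loop_succ hik]
    exact (ih (by omega)).conj_of_braid (commute_loop_sig hik le_rfl)
      (sig_braid (by omega) (by omega))

theorem loop_sigma_mixed_relation_general (m n i : ℕ) (hn : 2 ≤ n)
    (hi1 : 1 ≤ i) (hi2 : i ≤ m) :
    loop (m + n) m i * sig (m + n) (m + 1) * loop (m + n) m i * sig (m + n) (m + 1) =
      sig (m + n) (m + 1) * loop (m + n) m i * sig (m + n) (m + 1) * loop (m + n) m i :=
  mixedRel_loop_sig hi1 hi2 (by omega)

/-- The mixed relation `a_i σ_{m+1} a_i σ_{m+1} = σ_{m+1} a_i σ_{m+1} a_i` holds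
in the braid group `B_{m+n}` for `n ≥ 2`. -/
theorem loop_sigma_mixed_relation (m n i : ℕ) (hm : 1 ≤ m) (hn : 2 ≤ n)
    (hi1 : 1 ≤ i) (hi2 : i ≤ m) :
    loop (m + n) m i * sig (m + n) (m + 1) * loop (m + n) m i * sig (m + n) (m + 1) =
      sig (m + n) (m + 1) * loop (m + n) m i * sig (m + n) (m + 1) * loop (m + n) m i :=
  loop_sigma_mixed_relation_general m n i hn hi1 hi2
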